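/- Let k ≥ 2, let f be holomorphic on the upper half-plane, and fix τ₀, τ₁ ∈ ℍ. Define the period cocycle p(γ) ∈ ℂ[X]_{≤ k-2} by p(γ) = ∫_{γ^{-1}τ₀}^{τ₀} f(ξ)(X-ξ)^{k-2} dξ for γ in a subgroup G of SL₂(ℤ) under which f is weight-k invariant (f((aτ+b)/(cτ+d)) = (cτ+d)^k f(τ)). Then p satisfies the cocycle relation p(γ₁γ₂) = p(γ₁)|_{γ₂} + p(γ₂), where P(X)|_γ = (cX+d)^{k-2}P((aX+b)/(cX+d)); moreover, the cocycles attached to the two base points τ₀ and τ₁ differ by the coboundary γ ↦ Q|_γ - Q with Q(X) = ∫_{τ₁}^{τ₀} f(ξ)(X-ξ)^{k-2} dξ. -/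

import Mathlib

open Complex Real

/-- Line integral of `f` along the straight segment from `a` to `b` in `ℂ`. -/
noncomputable def lineInt (f : ℂ → ℂ) (a b : ℂ) : ℂ :=
  ∫ t in (0 : ℝ)..1, (b - a) * f ((1 - (t : ℂ)) * a + (t : ℂ) * b)

/-- Möbius action of `γ ∈ SL₂(ℤ)` on `ℂ`. -/
noncomputable def moeb (γ : Matrix.SpecialLinearGroup (Fin 2) ℤ) (z : ℂ) : ℂ :=
  (((γ : Matrix (Fin 2) (Fin 2) ℤ) 0 0 : ℂ) * z + ((γ : Matrix (Fin 2) (Fin 2) ℤ) 0 1 : ℂ)) /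
    (((γ : Matrix (Fin 2) (Fin 2) ℤ) 1 0 : ℂ) * z + ((γ : Matrix (Fin 2) (Fin 2) ℤ) 1 1 : ℂ))

/-- The period function `p^{τ₀}(γ)(X) = ∫_{γ⁻¹τ₀}^{τ₀} f(ξ)(X-ξ)^{k-2} dξ` (as a
polynomial function of `X`). -/
noncomputable def periodCocycle (k : ℕ) (f : ℂ → ℂ) (τ₀ : ℂ)
    (γ : Matrix.SpecialLinearGroup (Fin 2) ℤ) (X : ℂ) : ℂ :=
  lineInt (fun ξ => f ξ * (X - ξ) ^ (k - 2)) (moeb γ⁻¹ τ₀) τ₀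

/-!
A function holomorphic on `ℍ` has a primitive there, namely its wedge integral from `I`: every
rectangle with two opposite corners in `ℍ` lies in `ℍ`. Hence segment integrals in `ℍ` are
additive. For `γ = [[a, b], [c, d]]`, the substitution `ξ = γ⁻¹η`, the weight-`k` invariance of `f`
and the identity `X - γ⁻¹η = (cX + d) (γX - η) / (a - cη)` show that
`(cX + d)^(k-2) ∫_u^v f(η) (γX - η)^(k-2) dη = ∫_{γ⁻¹u}^{γ⁻¹v} f(ξ) (X - ξ)^(k-2) dξ`.
So `p(γ₁)|γ₂` is the integral from `γ₂⁻¹γ₁⁻¹τ₀` to `γ₂⁻¹τ₀`, and both statements reduce to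
additivity of segment integrals.
-/

open MeasureTheory Metric Set
open UpperHalfPlane (upperHalfPlaneSet isOpen_upperHalfPlaneSet)

section Primitive

variable {E : Type*} [NormedAddCommGroup E] {g : ℂ → E}

lemma ContinuousOn.intervalIntegrable_horizontal (hg : ContinuousOn g upperHalfPlaneSet)
    {y : ℝ} (hy : 0 < y) (a b : ℝ) :
    IntervalIntegrable (fun x : ℝ => g (x + y * I)) volume a b :=
  (hg.comp_continuous (by fun_prop) fun x => by simpa using hy).intervalIntegrable a b

lemma ContinuousOn.intervalIntegrable_vertical (hg : ContinuousOn g upperHalfPlaneSet)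
    (x : ℝ) {a b : ℝ} (ha : 0 < a) (hb : 0 < b) :
    IntervalIntegrable (fun y : ℝ => g (x + y * I)) volume a b :=
  (hg.comp (by fun_prop : Continuous fun y : ℝ => (x : ℂ) + y * I).continuousOn
    fun y hy => by simpa using (lt_min ha hb).trans_le hy.1).intervalIntegrable

variable [NormedSpace ℂ E]

lemma Complex.IsConservativeOn.wedgeIntegral_sub_wedgeIntegral
    (hg : IsConservativeOn g upperHalfPlaneSet) (hgc : ContinuousOn g upperHalfPlaneSet)
    {c z w : ℂ} (hc : 0 < c.im) (hz : 0 < z.im) (hw : 0 < w.im) :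
    wedgeIntegral c w g - wedgeIntegral c z g = wedgeIntegral z w g := by
  have horizontal := intervalIntegral.integral_add_adjacent_intervals
    (hgc.intervalIntegrable_horizontal hc c.re z.re)
    (hgc.intervalIntegrable_horizontal hc z.re w.re)
  have vertical := intervalIntegral.integral_add_adjacent_intervals
    (hgc.intervalIntegrable_vertical w.re hc hz) (hgc.intervalIntegrable_vertical w.re hz hw)
  have rectangle := hg (z.re + c.im * I) (w.re + z.im * I)
    ((convex_halfSpace_im_gt 0).rectangle_subset (by simpa) (by simpa) (by simpa) (by simpa))
  rw [← add_eq_zero_iff_eq_neg, wedgeIntegral_add_wedgeIntegral_eq] at rectangle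
  simp only [add_re, ofReal_re, mul_re, I_re, mul_zero, ofReal_im, I_im, mul_one, sub_self,
    add_zero, add_im, mul_im, zero_add] at rectangle
  simp only [wedgeIntegral, ← horizontal, ← vertical, smul_add]
  grind

theorem DifferentiableOn.isExactOn_upperHalfPlaneSet [CompleteSpace E]
    (hg : DifferentiableOn ℂ g upperHalfPlaneSet) : IsExactOn g upperHalfPlaneSet := by
  refine ⟨fun w => wedgeIntegral I w g, fun z hz => ?_⟩
  have hball : ball z z.im ⊆ upperHalfPlaneSet := fun w hw => by
    have := (abs_im_le_norm (w - z)).trans_lt (mem_ball_iff_norm.mp hw)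
    rw [sub_im, abs_lt] at this
    show 0 < w.im
    linarith
  have hlocal : HasDerivAt (fun w => wedgeIntegral z w g) (g z) z :=
    (hg.mono hball).isConservativeOn.hasDerivAt_wedgeIntegral (hg.continuousOn.mono hball)
      (mem_ball_self hz)
  refine (hlocal.const_add (wedgeIntegral I z g)).congr_of_eventuallyEq ?_
  filter_upwards [isOpen_upperHalfPlaneSet.mem_nhds hz] with w hw
  rw [← hg.isConservativeOn.wedgeIntegral_sub_wedgeIntegral hg.continuousOn (c := I) (by simp)
    hz hw]
  abel

end Primitive

section LineIntegral

variable {g h F : ℂ → ℂ} {a b c : ℂ}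

lemma one_sub_mul_add_mul_mem_segment {t : ℝ} (ht : t ∈ Icc (0 : ℝ) 1) :
    (1 - (t : ℂ)) * a + t * b ∈ segment ℝ a b :=
  ⟨1 - t, t, sub_nonneg.2 ht.2, ht.1, by ring, by simp [real_smul]⟩

lemma lineInt_congr (hgh : EqOn g h (segment ℝ a b)) : lineInt g a b = lineInt h a b := by
  refine intervalIntegral.integral_congr fun t ht => ?_
  rw [uIcc_of_le zero_le_one] at ht
  simp only [hgh (one_sub_mul_add_mul_mem_segment ht)]

lemma lineInt_const_mul (c : ℂ) : lineInt (fun z => c * g z) a b = c * lineInt g a b := by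
  simp only [lineInt, ← intervalIntegral.integral_const_mul]
  congr 1 with t
  ring

theorem lineInt_eq_sub_of_hasDerivAt (hF : ∀ z ∈ segment ℝ a b, HasDerivAt F (g z) z)
    (hg : ContinuousOn g (segment ℝ a b)) : lineInt g a b = F b - F a := by
  have hmem : MapsTo (fun t : ℝ => (1 - (t : ℂ)) * a + t * b) (uIcc 0 1) (segment ℝ a b) :=
    fun t ht => one_sub_mul_add_mul_mem_segment (by rwa [uIcc_of_le zero_le_one] at ht)
  have hpath (t : ℝ) : HasDerivAt (fun s : ℝ => (1 - (s : ℂ)) * a + s * b) (b - a) t :=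
    ((((hasDerivAt_id (t : ℂ)).const_sub 1).mul_const a).add
      ((hasDerivAt_id (t : ℂ)).mul_const b)).comp_ofReal.congr_deriv (by ring)
  rw [lineInt, intervalIntegral.integral_eq_sub_of_hasDerivAt
    (f := fun s : ℝ => F ((1 - (s : ℂ)) * a + s * b))
    (f' := fun t : ℝ => (b - a) * g ((1 - (t : ℂ)) * a + t * b))
    (fun t ht => ((hF _ (hmem ht)).comp t (hpath t)).congr_deriv (mul_comm _ _))
    (continuousOn_const.mul (hg.comp (by fun_prop) hmem)).intervalIntegrable]
  simp

variable (hg : DifferentiableOn ℂ g upperHalfPlaneSet)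
include hg

lemma lineInt_eq_sub_of_primitive (hF : ∀ z ∈ upperHalfPlaneSet, HasDerivAt F (g z) z)
    (ha : 0 < a.im) (hb : 0 < b.im) : lineInt g a b = F b - F a :=
  have hseg := (convex_halfSpace_im_gt 0).segment_subset ha hb
  lineInt_eq_sub_of_hasDerivAt (fun z hz => hF z (hseg hz)) (hg.continuousOn.mono hseg)

theorem lineInt_add_lineInt (ha : 0 < a.im) (hb : 0 < b.im) (hc : 0 < c.im) :
    lineInt g a b + lineInt g b c = lineInt g a c := by
  obtain ⟨F, hF⟩ := hg.isExactOn_upperHalfPlaneSet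
  rw [lineInt_eq_sub_of_primitive hg hF ha hb, lineInt_eq_sub_of_primitive hg hF hb hc,
    lineInt_eq_sub_of_primitive hg hF ha hc]
  ring

theorem lineInt_comp_mul_deriv {φ φ' : ℂ → ℂ} (hφ : ∀ z ∈ segment ℝ a b, HasDerivAt φ (φ' z) z)
    (hφ' : ContinuousOn φ' (segment ℝ a b)) (hmaps : MapsTo φ (segment ℝ a b) upperHalfPlaneSet) :
    lineInt (fun z => g (φ z) * φ' z) a b = lineInt g (φ a) (φ b) := by
  obtain ⟨F, hF⟩ := hg.isExactOn_upperHalfPlaneSet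
  have hφc : ContinuousOn φ (segment ℝ a b) :=
    fun z hz => (hφ z hz).continuousAt.continuousWithinAt
  rw [lineInt_eq_sub_of_hasDerivAt (F := F ∘ φ) (fun z hz => (hF _ (hmaps hz)).comp z (hφ z hz))
      ((hg.continuousOn.comp hφc hmaps).mul hφ'),
    lineInt_eq_sub_of_primitive hg hF (hmaps (left_mem_segment ℝ a b))
      (hmaps (right_mem_segment ℝ a b))]
  rfl

end LineIntegral

open scoped MatrixGroups

section Moebius

variable (γ : SL(2, ℤ))

def moebDenom (z : ℂ) : ℂ :=
  ((γ : Matrix (Fin 2) (Fin 2) ℤ) 1 0 : ℂ) * z + ((γ : Matrix (Fin 2) (Fin 2) ℤ) 1 1 : ℂ)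

lemma moebDenom_apply (z : ℂ) : moebDenom γ z =
    ((γ : Matrix (Fin 2) (Fin 2) ℤ) 1 0 : ℂ) * z + ((γ : Matrix (Fin 2) (Fin 2) ℤ) 1 1 : ℂ) := rfl

lemma det_coe_complex : (γ 0 0 : ℂ) * γ 1 1 - γ 0 1 * γ 1 0 = 1 := by
  have := γ.det_coe
  rw [Matrix.det_fin_two] at this
  exact_mod_cast this

lemma moeb_inv (z : ℂ) : moeb γ⁻¹ z = (γ 1 1 * z - γ 0 1) / (-γ 1 0 * z + γ 0 0) := by
  simp [moeb, Matrix.SpecialLinearGroup.SL2_inv_expl, sub_eq_add_neg]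

lemma moebDenom_inv (z : ℂ) : moebDenom γ⁻¹ z = -γ 1 0 * z + γ 0 0 := by
  simp [moebDenom, Matrix.SpecialLinearGroup.SL2_inv_expl]

lemma moeb_eq_smul (z : UpperHalfPlane) : moeb γ z = ↑(γ • z) := by
  rw [UpperHalfPlane.coe_specialLinearGroup_apply]
  simp [moeb]

lemma moebDenom_ne_zero {z : ℂ} (hz : 0 < z.im) : moebDenom γ z ≠ 0 := by
  simpa [moebDenom, UpperHalfPlane.denom] using
    UpperHalfPlane.denom_ne_zero_of_im (γ : GL (Fin 2) ℝ) hz.ne'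

lemma moeb_im_pos {z : ℂ} (hz : 0 < z.im) : 0 < (moeb γ z).im := by
  simpa [moeb_eq_smul γ ⟨z, hz⟩] using (γ • UpperHalfPlane.mk z hz).im_pos

lemma moeb_mul (γ' : SL(2, ℤ)) {z : ℂ} (hz : 0 < z.im) :
    moeb (γ * γ') z = moeb γ (moeb γ' z) := by
  rw [moeb_eq_smul _ ⟨z, hz⟩, mul_smul, ← moeb_eq_smul, ← moeb_eq_smul]

lemma hasDerivAt_moeb {z : ℂ} (hz : moebDenom γ z ≠ 0) :
    HasDerivAt (moeb γ) (moebDenom γ z ^ 2)⁻¹ z := by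
  have := ((hasDerivAt_id z).const_mul (γ 0 0 : ℂ) |>.add_const (γ 0 1 : ℂ)).div
    ((hasDerivAt_id z).const_mul (γ 1 0 : ℂ) |>.add_const (γ 1 1 : ℂ)) hz
  refine this.congr_deriv ?_
  simp only [moebDenom, id] at hz ⊢
  field_simp
  linear_combination det_coe_complex γ

lemma sub_moeb_inv {X ξ : ℂ} (hX : moebDenom γ X ≠ 0) (hξ : moebDenom γ⁻¹ ξ ≠ 0) :
    X - moeb γ⁻¹ ξ = moebDenom γ X * (moeb γ X - ξ) / moebDenom γ⁻¹ ξ := by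
  have hM : moebDenom γ X * moeb γ X = γ 0 0 * X + γ 0 1 := mul_div_cancel₀ _ hX
  rw [moebDenom_inv] at hξ ⊢
  rw [eq_div_iff hξ, moeb_inv, sub_mul, div_mul_cancel₀ _ hξ]
  simp only [moebDenom] at hM ⊢
  linear_combination -hM

end Moebius

section Periods

variable {γ : SL(2, ℤ)} {n : ℕ} {f : ℂ → ℂ} {X : ℂ}

lemma mul_sub_pow_comp_moeb_inv_mul_deriv {ξ : ℂ} (hX : moebDenom γ X ≠ 0)
    (hξ : moebDenom γ⁻¹ ξ ≠ 0) (hf : f (moeb γ⁻¹ ξ) = moebDenom γ⁻¹ ξ ^ (n + 2) * f ξ) :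
    f (moeb γ⁻¹ ξ) * (X - moeb γ⁻¹ ξ) ^ n * (moebDenom γ⁻¹ ξ ^ 2)⁻¹ =
      moebDenom γ X ^ n * (f ξ * (moeb γ X - ξ) ^ n) := by
  rw [hf, sub_moeb_inv γ hX hξ, div_pow, mul_pow, pow_add]
  field_simp

theorem moebDenom_pow_mul_lineInt (hf : DifferentiableOn ℂ f upperHalfPlaneSet)
    (hinv : ∀ ξ, 0 < ξ.im → f (moeb γ⁻¹ ξ) = moebDenom γ⁻¹ ξ ^ (n + 2) * f ξ)
    (hX : moebDenom γ X ≠ 0) {a b : ℂ} (ha : 0 < a.im) (hb : 0 < b.im) :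
    moebDenom γ X ^ n * lineInt (fun ξ => f ξ * (moeb γ X - ξ) ^ n) a b =
      lineInt (fun ξ => f ξ * (X - ξ) ^ n) (moeb γ⁻¹ a) (moeb γ⁻¹ b) := by
  have hseg := (convex_halfSpace_im_gt 0).segment_subset ha hb
  have hdenom (ξ : ℂ) (hξ : ξ ∈ segment ℝ a b) : moebDenom γ⁻¹ ξ ≠ 0 :=
    moebDenom_ne_zero _ (hseg hξ)
  have hderiv : ContinuousOn (fun ξ => (moebDenom γ⁻¹ ξ ^ 2)⁻¹) (segment ℝ a b) :=
    ContinuousOn.inv₀ (by fun_prop [moebDenom]) fun ξ hξ => pow_ne_zero 2 (hdenom ξ hξ)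
  rw [← lineInt_const_mul, ← lineInt_comp_mul_deriv (g := fun ξ => f ξ * (X - ξ) ^ n)
    (hf.mul (by fun_prop)) (fun ξ hξ => hasDerivAt_moeb _ (hdenom ξ hξ)) hderiv
    fun ξ hξ => moeb_im_pos _ (hseg hξ)]
  exact lineInt_congr fun ξ hξ =>
    (mul_sub_pow_comp_moeb_inv_mul_deriv hX (hdenom ξ hξ) (hinv ξ (hseg hξ))).symm

end Periods

/-- For `k ≥ 2`, `f` holomorphic on `ℍ` and weight-`k` invariant under a subgroup `G` of
`SL₂(ℤ)`, the period function `p(γ)(X) = ∫_{γ⁻¹τ₀}^{τ₀} f(ξ)(X-ξ)^{k-2} dξ` satisfies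
the cocycle relation `p(γ₁γ₂) = p(γ₁)|_{γ₂} + p(γ₂)` (as polynomials in `X`, i.e. away
from the pole of the fractional-linear substitution), and the cocycles attached to the two
base points `τ₀, τ₁ ∈ ℍ` differ by the coboundary `γ ↦ Q|_γ - Q` with
`Q(X) = ∫_{τ₁}^{τ₀} f(ξ)(X-ξ)^{k-2} dξ`. -/
theorem period_cocycle_relation (k : ℕ) (hk : 2 ≤ k)
    (f : ℂ → ℂ) (hf : DifferentiableOn ℂ f {z : ℂ | 0 < z.im})
    (G : Subgroup (Matrix.SpecialLinearGroup (Fin 2) ℤ))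
    (hinv : ∀ γ ∈ G, ∀ τ : ℂ, 0 < τ.im →
      f (moeb γ τ) =
        (((γ : Matrix (Fin 2) (Fin 2) ℤ) 1 0 : ℂ) * τ +
            ((γ : Matrix (Fin 2) (Fin 2) ℤ) 1 1 : ℂ)) ^ k * f τ)
    (τ₀ τ₁ : ℂ) (hτ₀ : 0 < τ₀.im) (hτ₁ : 0 < τ₁.im) :
    (∀ γ₁ ∈ G, ∀ γ₂ ∈ G, ∀ X : ℂ,
      ((γ₂ : Matrix (Fin 2) (Fin 2) ℤ) 1 0 : ℂ) * X +
          ((γ₂ : Matrix (Fin 2) (Fin 2) ℤ) 1 1 : ℂ) ≠ 0 →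
      periodCocycle k f τ₀ (γ₁ * γ₂) X =
        (((γ₂ : Matrix (Fin 2) (Fin 2) ℤ) 1 0 : ℂ) * X +
            ((γ₂ : Matrix (Fin 2) (Fin 2) ℤ) 1 1 : ℂ)) ^ (k - 2) *
          periodCocycle k f τ₀ γ₁ (moeb γ₂ X) +
        periodCocycle k f τ₀ γ₂ X) ∧
    (∀ γ ∈ G, ∀ X : ℂ,
      ((γ : Matrix (Fin 2) (Fin 2) ℤ) 1 0 : ℂ) * X +
          ((γ : Matrix (Fin 2) (Fin 2) ℤ) 1 1 : ℂ) ≠ 0 →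
      periodCocycle k f τ₁ γ X - periodCocycle k f τ₀ γ X =
        (((γ : Matrix (Fin 2) (Fin 2) ℤ) 1 0 : ℂ) * X +
            ((γ : Matrix (Fin 2) (Fin 2) ℤ) 1 1 : ℂ)) ^ (k - 2) *
          lineInt (fun ξ => f ξ * (moeb γ X - ξ) ^ (k - 2)) τ₁ τ₀ -
        lineInt (fun ξ => f ξ * (X - ξ) ^ (k - 2)) τ₁ τ₀) := by
  obtain ⟨n, rfl⟩ : ∃ n, k = n + 2 := ⟨k - 2, by omega⟩
  simp only [periodCocycle, Nat.add_sub_cancel, ← moebDenom_apply] at hinv ⊢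
  have hsubst {γ} (hγ : γ ∈ G) {X} (hX : moebDenom γ X ≠ 0) {a b : ℂ} (ha : 0 < a.im)
      (hb : 0 < b.im) := moebDenom_pow_mul_lineInt hf (hinv γ⁻¹ (inv_mem hγ)) hX ha hb
  have hadd (X : ℂ) {a b c : ℂ} (ha : 0 < a.im) (hb : 0 < b.im) (hc : 0 < c.im) :=
    lineInt_add_lineInt (g := fun ξ => f ξ * (X - ξ) ^ n) (hf.mul (by fun_prop)) ha hb hc
  have hmoeb {γ : SL(2, ℤ)} {τ : ℂ} (hτ : 0 < τ.im) := moeb_im_pos γ hτ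
  refine ⟨fun γ₁ _ γ₂ hγ₂ X hX => ?_, fun γ hγ X hX => ?_⟩
  · rw [mul_inv_rev, moeb_mul _ _ hτ₀, hsubst hγ₂ hX (hmoeb hτ₀) hτ₀,
      hadd X (hmoeb (hmoeb hτ₀)) (hmoeb hτ₀) hτ₀]
  · rw [hsubst hγ hX hτ₁ hτ₀]
    linear_combination hadd X (hmoeb hτ₁) hτ₁ hτ₀ - hadd X (hmoeb hτ₁) (hmoeb hτ₀) hτ₀
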